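/- Internal stability of the simpler SLS deployment realization (Section V-B, Theorem 1 of [tseng2020deployment]): Let K := RatFunc ℝ with z := RatFunc.X, let A : n×n and B : n×m be real matrices over K with z•1 − A invertible, and let Φx : n×n, Φu : m×n satisfy (z•1 − A) * Φx − B * Φu = 1. Set P := (z•1 − A)⁻¹ * B and define R_r := [[A + (1−z)•1, B, 0],[0, 0, z•Φu],[z⁻¹•(z•1 − A), −z⁻¹•B, 0]] and S_r := [[Φx, P, z•(P * Φu)],[Φu, 1, z•Φu],[z⁻¹•1, 0, 1]] (blocks indexed by x, u, δ with δ of dimension n). Then (1 − R_r) * S_r = 1 and S_r * (1 − R_r) = 1. -/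

import Mathlib

open Matrix

noncomputable section

set_option synthInstance.maxHeartbeats 1000000
set_option maxHeartbeats 1000000

/-- A 3×3 block matrix. -/
def b3 {α n₁ n₂ n₃ m₁ m₂ m₃ : Type*}
    (M₁₁ : Matrix n₁ m₁ α) (M₁₂ : Matrix n₁ m₂ α) (M₁₃ : Matrix n₁ m₃ α)
    (M₂₁ : Matrix n₂ m₁ α) (M₂₂ : Matrix n₂ m₂ α) (M₂₃ : Matrix n₂ m₃ α)
    (M₃₁ : Matrix n₃ m₁ α) (M₃₂ : Matrix n₃ m₂ α) (M₃₃ : Matrix n₃ m₃ α) :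
    Matrix (n₁ ⊕ n₂ ⊕ n₃) (m₁ ⊕ m₂ ⊕ m₃) α :=
  Matrix.fromBlocks M₁₁ (Matrix.fromCols M₁₂ M₁₃)
    (Matrix.fromRows M₂₁ M₃₁) (Matrix.fromBlocks M₂₂ M₂₃ M₃₂ M₃₃)

/-- A real constant matrix regarded as a matrix of rational transfer functions. -/
def mR {n m : Type*} (M : Matrix n m ℝ) : Matrix n m (RatFunc ℝ) :=
  M.map (algebraMap ℝ (RatFunc ℝ))

/-- The transfer-function variable `z`. -/
def zz : RatFunc ℝ := RatFunc.X

/-!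
Multiplying out blockwise, `(1 - R_r) S_r = 1` reduces to nine identities between the blocks.
The `(x, x)` and `(δ, x)` blocks are the SLP constraint `(z•1 - A) Φx - B Φu = 1` and `-z⁻¹`
times it; the other seven hold outright once `(z•1 - A) P` is replaced by `B`. The product in the other
order is then `1` as well, since a one-sided inverse of a square matrix over a field is two-sided.
-/

namespace Matrix

variable {α m n m₁ m₂ : Type*}

lemma fromRows_add_fromRows [Add α] (A : Matrix m₁ n α) (B : Matrix m₂ n α)
    (C : Matrix m₁ n α) (D : Matrix m₂ n α) :
    fromRows A B + fromRows C D = fromRows (A + C) (B + D) := by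
  ext (i | i) j <;> rfl

lemma fromCols_add_fromCols [Add α] (A : Matrix m m₁ α) (B : Matrix m m₂ α)
    (C : Matrix m m₁ α) (D : Matrix m m₂ α) :
    fromCols A B + fromCols C D = fromCols (A + C) (B + D) := by
  ext i (j | j) <;> rfl

end Matrix

section BlockThree

variable {α n₁ n₂ n₃ m₁ m₂ m₃ k₁ k₂ k₃ : Type*}

lemma b3_sub [Sub α]
    (A₁₁ : Matrix n₁ m₁ α) (A₁₂ : Matrix n₁ m₂ α) (A₁₃ : Matrix n₁ m₃ α)
    (A₂₁ : Matrix n₂ m₁ α) (A₂₂ : Matrix n₂ m₂ α) (A₂₃ : Matrix n₂ m₃ α)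
    (A₃₁ : Matrix n₃ m₁ α) (A₃₂ : Matrix n₃ m₂ α) (A₃₃ : Matrix n₃ m₃ α)
    (B₁₁ : Matrix n₁ m₁ α) (B₁₂ : Matrix n₁ m₂ α) (B₁₃ : Matrix n₁ m₃ α)
    (B₂₁ : Matrix n₂ m₁ α) (B₂₂ : Matrix n₂ m₂ α) (B₂₃ : Matrix n₂ m₃ α)
    (B₃₁ : Matrix n₃ m₁ α) (B₃₂ : Matrix n₃ m₂ α) (B₃₃ : Matrix n₃ m₃ α) :
    b3 A₁₁ A₁₂ A₁₃ A₂₁ A₂₂ A₂₃ A₃₁ A₃₂ A₃₃ - b3 B₁₁ B₁₂ B₁₃ B₂₁ B₂₂ B₂₃ B₃₁ B₃₂ B₃₃ =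
      b3 (A₁₁ - B₁₁) (A₁₂ - B₁₂) (A₁₃ - B₁₃) (A₂₁ - B₂₁) (A₂₂ - B₂₂) (A₂₃ - B₂₃)
        (A₃₁ - B₃₁) (A₃₂ - B₃₂) (A₃₃ - B₃₃) := by
  ext (i | i | i) (j | j | j) <;> rfl

lemma b3_one [Zero α] [One α] [DecidableEq n₁] [DecidableEq n₂] [DecidableEq n₃] :
    b3 (1 : Matrix n₁ n₁ α) 0 0 0 (1 : Matrix n₂ n₂ α) 0 0 0 (1 : Matrix n₃ n₃ α) = 1 := by
  ext (i | i | i) (j | j | j) <;> simp [b3, one_apply]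

lemma b3_mul_b3 [Semiring α] [Fintype m₁] [Fintype m₂] [Fintype m₃]
    (A₁₁ : Matrix n₁ m₁ α) (A₁₂ : Matrix n₁ m₂ α) (A₁₃ : Matrix n₁ m₃ α)
    (A₂₁ : Matrix n₂ m₁ α) (A₂₂ : Matrix n₂ m₂ α) (A₂₃ : Matrix n₂ m₃ α)
    (A₃₁ : Matrix n₃ m₁ α) (A₃₂ : Matrix n₃ m₂ α) (A₃₃ : Matrix n₃ m₃ α)
    (B₁₁ : Matrix m₁ k₁ α) (B₁₂ : Matrix m₁ k₂ α) (B₁₃ : Matrix m₁ k₃ α)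
    (B₂₁ : Matrix m₂ k₁ α) (B₂₂ : Matrix m₂ k₂ α) (B₂₃ : Matrix m₂ k₃ α)
    (B₃₁ : Matrix m₃ k₁ α) (B₃₂ : Matrix m₃ k₂ α) (B₃₃ : Matrix m₃ k₃ α) :
    b3 A₁₁ A₁₂ A₁₃ A₂₁ A₂₂ A₂₃ A₃₁ A₃₂ A₃₃ * b3 B₁₁ B₁₂ B₁₃ B₂₁ B₂₂ B₂₃ B₃₁ B₃₂ B₃₃ =
      b3 (A₁₁ * B₁₁ + (A₁₂ * B₂₁ + A₁₃ * B₃₁))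
        (A₁₁ * B₁₂ + (A₁₂ * B₂₂ + A₁₃ * B₃₂))
        (A₁₁ * B₁₃ + (A₁₂ * B₂₃ + A₁₃ * B₃₃))
        (A₂₁ * B₁₁ + (A₂₂ * B₂₁ + A₂₃ * B₃₁))
        (A₂₁ * B₁₂ + (A₂₂ * B₂₂ + A₂₃ * B₃₂))
        (A₂₁ * B₁₃ + (A₂₂ * B₂₃ + A₂₃ * B₃₃))
        (A₃₁ * B₁₁ + (A₃₂ * B₂₁ + A₃₃ * B₃₁))
        (A₃₁ * B₁₂ + (A₃₂ * B₂₂ + A₃₃ * B₃₂))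
        (A₃₁ * B₁₃ + (A₃₂ * B₂₃ + A₃₃ * B₃₃)) := by
  simp only [b3, fromBlocks_multiply, fromCols_mul_fromRows, fromCols_mul_fromBlocks,
    fromBlocks_mul_fromRows, mul_fromCols, fromRows_mul,
    fromBlocks_add, fromRows_add_fromRows, fromCols_add_fromCols,
    fromCols_fromRows_eq_fromBlocks]

end BlockThree

section Deployment

variable {K n m : Type*} [Field K] [DecidableEq n] [DecidableEq m]

def deploymentRealization (z : K) (A : Matrix n n K) (B : Matrix n m K) (Φu : Matrix m n K) :
    Matrix (n ⊕ m ⊕ n) (n ⊕ m ⊕ n) K :=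
  b3 (A + (1 - z) • 1) B 0
    0 0 (z • Φu)
    (z⁻¹ • (z • 1 - A)) (-(z⁻¹ • B)) 0

def deploymentStabilityMatrix [Fintype m] (z : K) (Φx : Matrix n n K) (Φu : Matrix m n K)
    (P : Matrix n m K) : Matrix (n ⊕ m ⊕ n) (n ⊕ m ⊕ n) K :=
  b3 Φx P (z • (P * Φu))
    Φu 1 (z • Φu)
    (z⁻¹ • 1) 0 1

lemma one_sub_deploymentRealization (z : K) (A : Matrix n n K) (B : Matrix n m K)
    (Φu : Matrix m n K) :
    1 - deploymentRealization z A B Φu =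
      b3 (z • 1 - A) (-B) 0
        0 1 (-(z • Φu))
        (-(z⁻¹ • (z • 1 - A))) (z⁻¹ • B) 1 := by
  rw [deploymentRealization, ← b3_one, b3_sub]
  congr 1 <;> module

theorem one_sub_deploymentRealization_mul [Fintype n] [Fintype m] {z : K} (hz : z ≠ 0)
    {A : Matrix n n K} {B : Matrix n m K} {Φx : Matrix n n K} {Φu : Matrix m n K}
    {P : Matrix n m K}
    (hSLP : (z • 1 - A) * Φx - B * Φu = 1) (hP : (z • 1 - A) * P = B) :
    (1 - deploymentRealization z A B Φu) * deploymentStabilityMatrix z Φx Φu P = 1 := by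
  rw [one_sub_deploymentRealization, deploymentStabilityMatrix, b3_mul_b3, ← b3_one]
  congr 1 <;>
    simp only [Matrix.mul_smul, Matrix.smul_mul, Matrix.neg_mul, Matrix.zero_mul,
      Matrix.mul_zero, Matrix.one_mul, Matrix.mul_one, ← Matrix.mul_assoc, hP, smul_neg,
      smul_smul, inv_mul_cancel₀ hz, mul_inv_cancel₀ hz, one_smul]
  case e_M₁₁ => linear_combination (norm := module) hSLP
  case e_M₃₁ => linear_combination (norm := module) -z⁻¹ • hSLP
  all_goals module

end Deployment

/-- **Internal stability of the simpler SLS deployment realization** (Section V-B,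
Theorem 1 of [tseng2020deployment]).  For `(Φx, Φu)` satisfying the SLP constraint and
`z•1 - A` invertible with `P := (z•1 - A)⁻¹ B`, the deployment realization `R_r` has
internal stability matrix `S_r`. -/
theorem deployment_sf_sls_realization {n m : Type*} [Fintype n] [Fintype m]
    [DecidableEq n] [DecidableEq m]
    (A : Matrix n n ℝ) (B : Matrix n m ℝ)
    (hA : IsUnit (zz • (1 : Matrix n n (RatFunc ℝ)) - mR A))
    (Φx : Matrix n n (RatFunc ℝ)) (Φu : Matrix m n (RatFunc ℝ))
    (hSLP : (zz • (1 : Matrix n n (RatFunc ℝ)) - mR A) * Φx - mR B * Φu = 1) :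
    let P := (zz • (1 : Matrix n n (RatFunc ℝ)) - mR A)⁻¹ * mR B
    let Rr := b3 (mR A + (1 - zz) • (1 : Matrix n n (RatFunc ℝ))) (mR B)
        (0 : Matrix n n (RatFunc ℝ))
        (0 : Matrix m n (RatFunc ℝ)) (0 : Matrix m m (RatFunc ℝ)) (zz • Φu)
        (zz⁻¹ • (zz • (1 : Matrix n n (RatFunc ℝ)) - mR A)) (-(zz⁻¹ • mR B))
        (0 : Matrix n n (RatFunc ℝ))
    let Sr := b3 Φx P (zz • (P * Φu))
        Φu (1 : Matrix m m (RatFunc ℝ)) (zz • Φu)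
        (zz⁻¹ • (1 : Matrix n n (RatFunc ℝ))) (0 : Matrix n m (RatFunc ℝ))
        (1 : Matrix n n (RatFunc ℝ))
    (1 - Rr) * Sr = 1 ∧ Sr * (1 - Rr) = 1 := by
  intro P Rr Sr
  have hP : (zz • 1 - mR A) * P = mR B :=
    mul_nonsing_inv_cancel_left _ _ ((isUnit_iff_isUnit_det _).mp hA)
  have h : (1 - Rr) * Sr = 1 := one_sub_deploymentRealization_mul RatFunc.X_ne_zero hSLP hP
  exact ⟨h, mul_eq_one_comm.mp h⟩

end
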